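/- arXiv:1505.06093 — 5 statements merged into one kernel-verified Lean document; each statement's English description precedes it below -/
import Mathlib

section
/- The Korányi gauge d_K((x,y,t),(x',y',t')) = ((|x−x'|² + |y−y'|²)² + |t − t' + 2(x·y' − y·x')|²)^{1/4} defines a metric on ℍⁿ = ℝⁿ × ℝⁿ × ℝ. -/
open Real Set

noncomputable section

/-- The underlying space of the Heisenberg group `ℍⁿ = ℝⁿ × ℝⁿ × ℝ`. -/
abbrev Hpt (n : ℕ) := (Fin n → ℝ) × (Fin n → ℝ) × ℝ

/-- Euclidean scalar product on `ℝⁿ`. -/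
def dot {n : ℕ} (x y : Fin n → ℝ) : ℝ := ∑ i, x i * y i

/-- The Heisenberg group law. -/
def Hmul {n : ℕ} (p q : Hpt n) : Hpt n :=
  (p.1 + q.1, p.2.1 + q.2.1, p.2.2 + q.2.2 + 2 * (dot p.2.1 q.1 - dot p.1 q.2.1))

/-- The Heisenberg group inverse `(x,y,t)⁻¹ = (−x,−y,−t)`. -/
def Hinv {n : ℕ} (p : Hpt n) : Hpt n := (-p.1, -p.2.1, -p.2.2)

/-- The homogeneous dilation `δ_s(x,y,t) = (sx, sy, s²t)`. -/
def Hdil {n : ℕ} (s : ℝ) (p : Hpt n) : Hpt n := (s • p.1, s • p.2.1, s ^ 2 * p.2.2)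

/-- The Korányi gauge metric. -/
def dK {n : ℕ} (p q : Hpt n) : ℝ :=
  ((dot (p.1 - q.1) (p.1 - q.1) + dot (p.2.1 - q.2.1) (p.2.1 - q.2.1)) ^ 2
    + (p.2.2 - q.2.2 + 2 * (dot p.1 q.2.1 - dot p.2.1 q.1)) ^ 2) ^ ((1 : ℝ) / 4)

/-! Identify `ℝⁿ × ℝⁿ` with `ℂⁿ` via `z = x + i y`. The complex number
`A(p, q) = |z_p - z_q|² + i (t_p - t_q + 2 Im⟪z_p, z_q⟫)` satisfies `d_K(p, q) = |A(p, q)|^{1/2}` and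
the cocycle identity `A(p, r) = A(p, q) + A(q, r) + 2 ⟪z_q - z_r, z_p - z_q⟫`. By Cauchy–Schwarz the
last term has modulus at most `|z_p - z_q| |z_q - z_r| ≤ (|A(p, q)| |A(q, r)|)^{1/2}`, so
`|A(p, r)| ≤ (d_K(p, q) + d_K(q, r))²`. -/

open ComplexConjugate

theorem sqrt_norm_add_add_two_nsmul_le {F : Type*} [SeminormedAddCommGroup F] {a b c : F}
    (h : ‖c‖ ^ 2 ≤ ‖a‖ * ‖b‖) : √‖a + b + 2 • c‖ ≤ √‖a‖ + √‖b‖ := by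
  have hc : ‖c‖ ≤ √‖a‖ * √‖b‖ := by
    rw [← Real.sqrt_mul (norm_nonneg a)]
    exact Real.le_sqrt_of_sq_le h
  rw [Real.sqrt_le_left (by positivity)]
  calc ‖a + b + 2 • c‖ ≤ ‖a‖ + ‖b‖ + 2 * ‖c‖ := by
        grw [norm_add₃_le, norm_nsmul_le]; norm_num
    _ ≤ ‖a‖ + ‖b‖ + 2 * (√‖a‖ * √‖b‖) := by gcongr
    _ = (√‖a‖ + √‖b‖) ^ 2 := by
        rw [add_sq, Real.sq_sqrt (norm_nonneg a), Real.sq_sqrt (norm_nonneg b)]; ring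

section KoranyiGauge

variable {E : Type*} [SeminormedAddCommGroup E] [InnerProductSpace ℂ E]

theorem Complex.im_inner_swap (x y : E) : (inner ℂ y x).im = -(inner ℂ x y).im :=
  inner_im_symm (𝕜 := ℂ) y x

theorem Complex.im_inner_self (x : E) : (inner ℂ x x).im = 0 :=
  inner_self_im (𝕜 := ℂ) x

def koranyiGauge (p q : E × ℝ) : ℂ :=
  ⟨‖p.1 - q.1‖ ^ 2, p.2 - q.2 + 2 * (inner ℂ p.1 q.1).im⟩

def koranyiDist (p q : E × ℝ) : ℝ := √‖koranyiGauge p q‖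

theorem koranyiDist_nonneg (p q : E × ℝ) : 0 ≤ koranyiDist p q := Real.sqrt_nonneg _

theorem koranyiGauge_swap (p q : E × ℝ) : koranyiGauge q p = conj (koranyiGauge p q) := by
  apply Complex.ext
  · simp only [koranyiGauge, Complex.conj_re, norm_sub_rev]
  · simp only [koranyiGauge, Complex.conj_im, Complex.im_inner_swap p.1 q.1]
    ring

theorem koranyiDist_comm (p q : E × ℝ) : koranyiDist p q = koranyiDist q p := by
  rw [koranyiDist, koranyiDist, koranyiGauge_swap p q, Complex.norm_conj]

theorem koranyiGauge_add (p q r : E × ℝ) :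
    koranyiGauge p r =
      koranyiGauge p q + koranyiGauge q r + 2 * inner ℂ (q.1 - r.1) (p.1 - q.1) := by
  have hsplit : p.1 - r.1 = (p.1 - q.1) + (q.1 - r.1) := by abel
  apply Complex.ext
  · simp only [koranyiGauge, Complex.add_re, Complex.mul_re, hsplit, norm_add_sq (𝕜 := ℂ),
      inner_re_symm (𝕜 := ℂ) (p.1 - q.1), RCLike.re_to_complex, Complex.re_ofNat,
      Complex.im_ofNat, zero_mul, sub_zero]
    ring
  · simp only [koranyiGauge, Complex.add_im, Complex.mul_im, Complex.re_ofNat, Complex.im_ofNat,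
      zero_mul, add_zero, inner_sub_left, inner_sub_right, Complex.sub_im,
      Complex.im_inner_swap p.1, Complex.im_inner_swap q.1 r.1, Complex.im_inner_self]
    ring

theorem norm_sq_sub_le_norm_koranyiGauge (p q : E × ℝ) :
    ‖p.1 - q.1‖ ^ 2 ≤ ‖koranyiGauge p q‖ :=
  Complex.re_le_norm (koranyiGauge p q)

theorem norm_inner_sq_le_norm_koranyiGauge_mul (p q r : E × ℝ) :
    ‖inner ℂ (q.1 - r.1) (p.1 - q.1)‖ ^ 2 ≤ ‖koranyiGauge p q‖ * ‖koranyiGauge q r‖ :=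
  calc ‖inner ℂ (q.1 - r.1) (p.1 - q.1)‖ ^ 2 ≤ (‖q.1 - r.1‖ * ‖p.1 - q.1‖) ^ 2 := by
        gcongr; exact norm_inner_le_norm _ _
    _ = ‖p.1 - q.1‖ ^ 2 * ‖q.1 - r.1‖ ^ 2 := by ring
    _ ≤ ‖koranyiGauge p q‖ * ‖koranyiGauge q r‖ := by
        gcongr <;> exact norm_sq_sub_le_norm_koranyiGauge _ _

theorem koranyiDist_triangle (p q r : E × ℝ) :
    koranyiDist p r ≤ koranyiDist p q + koranyiDist q r := by
  rw [koranyiDist, koranyiGauge_add p q r, two_mul, ← two_nsmul]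
  exact sqrt_norm_add_add_two_nsmul_le (norm_inner_sq_le_norm_koranyiGauge_mul p q r)

end KoranyiGauge

section KoranyiGaugeNormed

variable {E : Type*} [NormedAddCommGroup E] [InnerProductSpace ℂ E]

theorem koranyiGauge_eq_zero_iff {p q : E × ℝ} : koranyiGauge p q = 0 ↔ p = q := by
  constructor
  · intro h
    have hre : ‖p.1 - q.1‖ ^ 2 = 0 := congrArg Complex.re h
    have him : p.2 - q.2 + 2 * (inner ℂ p.1 q.1).im = 0 := congrArg Complex.im h
    have h1 : p.1 = q.1 := by simpa [sub_eq_zero] using hre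
    rw [h1, Complex.im_inner_self] at him
    exact Prod.ext h1 (by linarith)
  · rintro rfl
    apply Complex.ext <;>
      simp only [koranyiGauge, sub_self, norm_zero, Complex.im_inner_self] <;> norm_num

theorem koranyiDist_eq_zero_iff {p q : E × ℝ} : koranyiDist p q = 0 ↔ p = q := by
  rw [koranyiDist, Real.sqrt_eq_zero (norm_nonneg _), norm_eq_zero, koranyiGauge_eq_zero_iff]

end KoranyiGaugeNormed

def complexify {n : ℕ} (x y : Fin n → ℝ) : EuclideanSpace ℂ (Fin n) :=
  WithLp.toLp 2 fun i => ⟨x i, y i⟩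

theorem complexify_sub {n : ℕ} (x y x' y' : Fin n → ℝ) :
    complexify (x - x') (y - y') = complexify x y - complexify x' y' := by
  ext i
  simp [complexify, Complex.ext_iff]

theorem complexify_inj {n : ℕ} {x y x' y' : Fin n → ℝ} :
    complexify x y = complexify x' y' ↔ x = x' ∧ y = y' := by
  simp [complexify, funext_iff, Complex.ext_iff, forall_and]

theorem norm_complexify_sq {n : ℕ} (x y : Fin n → ℝ) :
    ‖complexify x y‖ ^ 2 = dot x x + dot y y := by
  simp only [EuclideanSpace.norm_sq_eq, complexify, Complex.sq_norm, Complex.normSq_mk, dot,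
    ← Finset.sum_add_distrib]

theorem im_inner_complexify {n : ℕ} (x y x' y' : Fin n → ℝ) :
    (inner ℂ (complexify x y) (complexify x' y')).im = dot x y' - dot y x' := by
  simp only [PiLp.inner_apply, complexify, RCLike.inner_apply, Complex.im_sum, dot,
    ← Finset.sum_sub_distrib]
  refine Finset.sum_congr rfl fun i _ => ?_
  simp only [Complex.mul_im, Complex.conj_im, Complex.conj_re]
  ring

def Hpt.toComplex {n : ℕ} (p : Hpt n) : EuclideanSpace ℂ (Fin n) × ℝ :=
  (complexify p.1 p.2.1, p.2.2)

theorem Hpt.toComplex_injective {n : ℕ} : Function.Injective (Hpt.toComplex (n := n)) := by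
  intro p q h
  obtain ⟨hxy, ht⟩ := Prod.ext_iff.mp h
  obtain ⟨hx, hy⟩ := complexify_inj.mp hxy
  exact Prod.ext hx (Prod.ext hy ht)

theorem rpow_one_div_four_eq_sqrt_norm (a b : ℝ) :
    (a ^ 2 + b ^ 2) ^ ((1 : ℝ) / 4) = √‖(⟨a, b⟩ : ℂ)‖ := by
  rw [Complex.norm_def, Complex.normSq_mk, ← sq, ← sq, Real.sqrt_eq_rpow, Real.sqrt_eq_rpow,
    ← Real.rpow_mul (by positivity)]
  norm_num

theorem dK_eq_koranyiDist {n : ℕ} (p q : Hpt n) :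
    dK p q = koranyiDist p.toComplex q.toComplex := by
  rw [dK, koranyiDist, koranyiGauge, Hpt.toComplex, Hpt.toComplex, ← complexify_sub,
    norm_complexify_sq, im_inner_complexify, rpow_one_div_four_eq_sqrt_norm]

theorem koranyi_is_metric (n : ℕ) :
    (∀ p q : Hpt n, 0 ≤ dK p q) ∧
    (∀ p q : Hpt n, dK p q = 0 ↔ p = q) ∧
    (∀ p q : Hpt n, dK p q = dK q p) ∧
    (∀ p q r : Hpt n, dK p r ≤ dK p q + dK q r) := by
  refine ⟨fun p q => ?_, fun p q => ?_, fun p q => ?_, fun p q r => ?_⟩ <;>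
    simp only [dK_eq_koranyiDist]
  · exact koranyiDist_nonneg _ _
  · rw [koranyiDist_eq_zero_iff, Hpt.toComplex_injective.eq_iff]
  · exact koranyiDist_comm _ _
  · exact koranyiDist_triangle _ _ _
end
end

section
/- The map Φ restricted to S^{2n−1} × (0,2π) is injective: if Φ((a,b),s) = Φ((a',b'),s') with s,s' ∈ (0,2π), then s = s' and (a,b) = (a',b'). -/
open Real Set

noncomputable section

/-- The parametrization `Φ : S^{2n−1} × [0,2π] → ℍⁿ` by geodesics. -/
def Phi {n : ℕ} (ab : (Fin n → ℝ) × (Fin n → ℝ)) (s : ℝ) : Hpt n :=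
  (Real.sin s • ab.1 + (1 - Real.cos s) • ab.2,
   -((1 - Real.cos s) • ab.1) + Real.sin s • ab.2,
   2 * (s - Real.sin s))

/-- The unit sphere `S^{2n−1} ⊂ ℝⁿ × ℝⁿ`. -/
def Sph (n : ℕ) : Set ((Fin n → ℝ) × (Fin n → ℝ)) :=
  {ab | dot ab.1 ab.1 + dot ab.2 ab.2 = 1}


lemma cos_lt_one_of_Ioo (x : ℝ) (hx : x ∈ Set.Ioo 0 (2 * π)) : Real.cos x < 1 := by
  rcases lt_or_eq_of_le (Real.cos_le_one x) with h | h
  · exact h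
  · exfalso
    have h2π : -(2 * π) < x := by linarith [hx.1, Real.pi_pos]
    have := (Real.cos_eq_one_iff_of_lt_of_lt h2π hx.2).mp h
    linarith [hx.1]

lemma strictMonoOn_sub_sin : StrictMonoOn (fun x : ℝ => x - Real.sin x) (Set.Icc 0 (2 * π)) := by
  apply strictMonoOn_of_deriv_pos (convex_Icc _ _)
  · exact (continuous_id.sub Real.continuous_sin).continuousOn
  · intro x hx
    rw [interior_Icc] at hx
    have hd : deriv (fun x : ℝ => x - Real.sin x) x = 1 - Real.cos x :=
      ((hasDerivAt_id x).sub (Real.hasDerivAt_sin x)).deriv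
    rw [hd]
    linarith [cos_lt_one_of_Ioo x hx]

theorem Phi_injective (n : ℕ) (ab ab' : (Fin n → ℝ) × (Fin n → ℝ))
    (hab : ab ∈ Sph n) (hab' : ab' ∈ Sph n)
    {s s' : ℝ} (hs : s ∈ Ioo 0 (2 * π)) (hs' : s' ∈ Ioo 0 (2 * π))
    (h : Phi ab s = Phi ab' s') :
    s = s' ∧ ab = ab' := by
  have h3 : 2 * (s - Real.sin s) = 2 * (s' - Real.sin s') := congrArg (fun p => p.2.2) h
  have hss : s = s' := by
    apply strictMonoOn_sub_sin.injOn (Set.mem_Icc_of_Ioo hs) (Set.mem_Icc_of_Ioo hs')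
    dsimp only; linarith
  subst hss
  refine ⟨rfl, ?_⟩
  have h1 : Real.sin s • ab.1 + (1 - Real.cos s) • ab.2
      = Real.sin s • ab'.1 + (1 - Real.cos s) • ab'.2 := congrArg (fun p => p.1) h
  have h2 : -((1 - Real.cos s) • ab.1) + Real.sin s • ab.2
      = -((1 - Real.cos s) • ab'.1) + Real.sin s • ab'.2 := congrArg (fun p => p.2.1) h
  set c := Real.sin s
  set d := 1 - Real.cos s
  have hpos : 0 < c ^ 2 + d ^ 2 := by
    have hc : Real.cos s < 1 := cos_lt_one_of_Ioo s hs
    have : c ^ 2 + d ^ 2 = 2 * (1 - Real.cos s) := by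
      simp only [c, d]; nlinarith [Real.sin_sq_add_cos_sq s]
    rw [this]; linarith
  have ha : ab.1 = ab'.1 := by
    funext i
    have e1 := congrFun h1 i
    have e2 := congrFun h2 i
    simp only [Pi.add_apply, Pi.smul_apply, Pi.neg_apply, smul_eq_mul] at e1 e2
    have key : (c ^ 2 + d ^ 2) * (ab.1 i - ab'.1 i) = 0 := by linear_combination c * e1 - d * e2
    have := mul_eq_zero.mp key
    rcases this with h' | h'
    · exact absurd h' (ne_of_gt hpos)
    · linarith
  have hb : ab.2 = ab'.2 := by
    funext i
    have e1 := congrFun h1 i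
    have e2 := congrFun h2 i
    simp only [Pi.add_apply, Pi.smul_apply, Pi.neg_apply, smul_eq_mul] at e1 e2
    have key : (c ^ 2 + d ^ 2) * (ab.2 i - ab'.2 i) = 0 := by linear_combination d * e1 + c * e2
    have := mul_eq_zero.mp key
    rcases this with h' | h'
    · exact absurd h' (ne_of_gt hpos)
    · linarith
  exact Prod.ext ha hb
end
end

section
/- For fixed s ∈ (0,2π) and (a,b),(a',b') ∈ S^{2n−1}, the points p = Φ((a,b),s) and q = Φ((a',b'),s) satisfy d_K(p,q) = (2 − 2cos s)^{1/2} · ((|a−a'|² + |b−b'|²)² + 4|a·b' − b·a'|²)^{1/4}. -/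
open Real Set

noncomputable section

lemma dot_add_left {n : ℕ} (u v w : Fin n → ℝ) : dot (u + v) w = dot u w + dot v w := by
  simp [dot, add_mul, Finset.sum_add_distrib]

lemma dot_add_right {n : ℕ} (u v w : Fin n → ℝ) : dot u (v + w) = dot u v + dot u w := by
  simp [dot, mul_add, Finset.sum_add_distrib]

lemma dot_sub_left {n : ℕ} (u v w : Fin n → ℝ) : dot (u - v) w = dot u w - dot v w := by
  simp [dot, sub_mul, Finset.sum_sub_distrib]

lemma dot_sub_right {n : ℕ} (u v w : Fin n → ℝ) : dot u (v - w) = dot u v - dot u w := by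
  simp [dot, mul_sub, Finset.sum_sub_distrib]

lemma dot_smul_left {n : ℕ} (r : ℝ) (u v : Fin n → ℝ) : dot (r • u) v = r * dot u v := by
  simp [dot, Finset.mul_sum, mul_assoc]

lemma dot_smul_right {n : ℕ} (r : ℝ) (u v : Fin n → ℝ) : dot u (r • v) = r * dot u v := by
  simp only [dot, Pi.smul_apply, smul_eq_mul]
  rw [Finset.mul_sum]
  exact Finset.sum_congr rfl fun i _ => by ring

lemma dot_neg_left {n : ℕ} (u v : Fin n → ℝ) : dot (-u) v = - dot u v := by
  simp [dot]

lemma dot_comm {n : ℕ} (u v : Fin n → ℝ) : dot u v = dot v u := by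
  simp [dot, mul_comm]


lemma dot_neg_right {n : ℕ} (u v : Fin n → ℝ) : dot u (-v) = - dot u v := by
  simp [dot]

set_option maxHeartbeats 1000000 in
lemma h1_aux (n : ℕ) (s : ℝ) (ab ab' : (Fin n → ℝ) × (Fin n → ℝ)) :
    dot ((Phi ab s).1 - (Phi ab' s).1) ((Phi ab s).1 - (Phi ab' s).1)
      + dot ((Phi ab s).2.1 - (Phi ab' s).2.1) ((Phi ab s).2.1 - (Phi ab' s).2.1)
    = (2 - 2 * Real.cos s) *
        (dot (ab.1 - ab'.1) (ab.1 - ab'.1) + dot (ab.2 - ab'.2) (ab.2 - ab'.2)) := by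
  have hpyth : Real.sin s ^ 2 = 1 - Real.cos s ^ 2 := by
    have := Real.sin_sq_add_cos_sq s; linarith
  simp only [Phi]
  simp only [dot_sub_left, dot_sub_right, dot_add_left, dot_add_right, dot_smul_left,
    dot_smul_right, dot_neg_left, dot_neg_right]
  rw [dot_comm ab'.1 ab.1, dot_comm ab'.2 ab.2, dot_comm ab'.1 ab.2, dot_comm ab'.2 ab.1]
  ring_nf
  rw [hpyth]
  ring

set_option maxHeartbeats 1000000 in
lemma h2_aux (n : ℕ) (s : ℝ) (ab ab' : (Fin n → ℝ) × (Fin n → ℝ)) :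
    (Phi ab s).2.2 - (Phi ab' s).2.2
      + 2 * (dot (Phi ab s).1 (Phi ab' s).2.1 - dot (Phi ab s).2.1 (Phi ab' s).1)
    = (2 - 2 * Real.cos s) * (2 * (dot ab.1 ab'.2 - dot ab.2 ab'.1)) := by
  have hpyth : Real.sin s ^ 2 = 1 - Real.cos s ^ 2 := by
    have := Real.sin_sq_add_cos_sq s; linarith
  simp only [Phi]
  simp only [dot_sub_left, dot_sub_right, dot_add_left, dot_add_right, dot_smul_left,
    dot_smul_right, dot_neg_left, dot_neg_right]
  ring_nf
  rw [hpyth]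
  ring

theorem koranyi_distance_same_height (n : ℕ) {s : ℝ} (hs : s ∈ Ioo 0 (2 * π))
    (ab ab' : (Fin n → ℝ) × (Fin n → ℝ)) (hab : ab ∈ Sph n) (hab' : ab' ∈ Sph n) :
    dK (Phi ab s) (Phi ab' s) =
      Real.sqrt (2 - 2 * Real.cos s) *
        ((dot (ab.1 - ab'.1) (ab.1 - ab'.1) + dot (ab.2 - ab'.2) (ab.2 - ab'.2)) ^ 2
          + 4 * (dot ab.1 ab'.2 - dot ab.2 ab'.1) ^ 2) ^ ((1 : ℝ) / 4) := by
  set K : ℝ := 2 - 2 * Real.cos s with hK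
  set M : ℝ := (dot (ab.1 - ab'.1) (ab.1 - ab'.1) + dot (ab.2 - ab'.2) (ab.2 - ab'.2)) ^ 2
      + 4 * (dot ab.1 ab'.2 - dot ab.2 ab'.1) ^ 2 with hM
  have hK0 : 0 ≤ K := by
    have := Real.cos_le_one s
    rw [hK]; linarith
  have hM0 : 0 ≤ M := by positivity
  have key : dK (Phi ab s) (Phi ab' s) = (K ^ 2 * M) ^ ((1 : ℝ) / 4) := by
    rw [dK, h1_aux, h2_aux, hM]
    congr 1
    ring
  rw [key]
  have h1 : (K ^ 2 * M) ^ ((1 : ℝ) / 4) = (K ^ 2) ^ ((1 : ℝ) / 4) * M ^ ((1 : ℝ) / 4) :=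
    Real.mul_rpow (by positivity) hM0
  rw [h1]
  congr 1
  rw [← Real.rpow_natCast K 2, ← Real.rpow_mul hK0, Real.sqrt_eq_rpow]
  norm_num
end
end

section
/- The map f: ℍⁿ → ℍⁿ (in cartesian coordinates) given by f(x,y,t) = (cos φ(t)·x + sin φ(t)·y, sin φ(t)·x − cos φ(t)·y, t), where φ is the inverse of s ↦ 2(s − sin s), is continuous on ℝⁿ×ℝⁿ×[0,4π] and smooth on the interior {0 < t < 4π}. -/
open Real Set

noncomputable section

private lemma abs_sin_lt {x : ℝ} (hx : 0 < x) : |Real.sin x| < x := by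
  rcases le_or_gt x π with h | h
  · rw [abs_of_nonneg (Real.sin_nonneg_of_nonneg_of_le_pi hx.le h)]
    exact Real.sin_lt hx
  · have h1 : |Real.sin x| ≤ 1 := abs_le.2 ⟨Real.neg_one_le_sin x, Real.sin_le_one x⟩
    have : (3 : ℝ) < π := Real.pi_gt_three
    linarith

private lemma gsm : StrictMono (fun s : ℝ => 2 * (s - Real.sin s)) := by
  intro a b hab
  have hd : 0 < (b - a) / 2 := by linarith
  have h1 : |Real.sin ((b - a) / 2)| < (b - a) / 2 := abs_sin_lt hd
  have h2 : |Real.cos ((b + a) / 2)| ≤ 1 := Real.abs_cos_le_one _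
  have h3 : Real.sin b - Real.sin a
      = 2 * Real.sin ((b - a) / 2) * Real.cos ((b + a) / 2) := Real.sin_sub_sin b a
  have h4 : Real.sin b - Real.sin a < b - a := by
    calc Real.sin b - Real.sin a
        = 2 * Real.sin ((b - a) / 2) * Real.cos ((b + a) / 2) := h3
      _ ≤ |2 * Real.sin ((b - a) / 2) * Real.cos ((b + a) / 2)| := le_abs_self _
      _ = 2 * |Real.sin ((b - a) / 2)| * |Real.cos ((b + a) / 2)| := by
          rw [abs_mul, abs_mul, abs_two]
      _ ≤ 2 * |Real.sin ((b - a) / 2)| * 1 := by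
          have := abs_nonneg (Real.sin ((b - a) / 2))
          nlinarith
      _ < b - a := by linarith
  simp only
  linarith

private lemma phi_props (phi : ℝ → ℝ)
    (hphi : ∀ s ∈ Icc (0 : ℝ) (2 * π), phi (2 * (s - Real.sin s)) = s) :
    ContinuousOn phi (Icc 0 (4 * π)) ∧ ContDiffOn ℝ (⊤ : ℕ∞) phi (Ioo 0 (4 * π)) := by
  set G : ℝ → ℝ := fun s => 2 * (s - Real.sin s) with hGdef
  have hpi : (0 : ℝ) < π := Real.pi_pos
  have hG : ContDiff ℝ (⊤ : ℕ∞) G := contDiff_const.mul (contDiff_id.sub Real.contDiff_sin)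
  have hG0 : G 0 = 0 := by simp [hGdef]
  have hG2 : G (2 * π) = 4 * π := by
    simp [hGdef, Real.sin_two_pi]; ring
  have hsurj : ∀ t ∈ Icc (0 : ℝ) (4 * π), ∃ s ∈ Icc (0 : ℝ) (2 * π), G s = t := by
    intro t ht
    have hsub := intermediate_value_Icc (by linarith : (0:ℝ) ≤ 2 * π) hG.continuous.continuousOn
    rw [hG0, hG2] at hsub
    obtain ⟨s, hs, hGs⟩ := hsub ht
    exact ⟨s, hs, hGs⟩
  have hmaps : MapsTo G (Icc 0 (2 * π)) (Icc 0 (4 * π)) := by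
    intro s hs
    constructor
    · have := gsm.monotone hs.1
      calc (0:ℝ) = G 0 := hG0.symm
        _ ≤ G s := this
    · have := gsm.monotone hs.2
      calc G s ≤ G (2 * π) := this
        _ = 4 * π := hG2
  constructor
  · -- continuity
    let e : Icc (0 : ℝ) (2 * π) ≃ Icc (0 : ℝ) (4 * π) :=
      Equiv.ofBijective (fun s => ⟨G s.1, hmaps s.2⟩)
        ⟨fun a b h => Subtype.ext (gsm.injective (congrArg Subtype.val h)),
         fun t => by
          obtain ⟨s, hs, hGs⟩ := hsurj t t.2
          exact ⟨⟨s, hs⟩, Subtype.ext hGs⟩⟩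
    have hce : Continuous e :=
      (hG.continuous.comp continuous_subtype_val).subtype_mk _
    let homeo := hce.homeoOfEquivCompactToT2
    have key : ∀ t : Icc (0 : ℝ) (4 * π), phi t = (homeo.symm t : ℝ) := by
      intro t
      have hst : G (homeo.symm t : ℝ) = t :=
        congrArg Subtype.val (homeo.apply_symm_apply t)
      rw [← hst]
      exact hphi _ (homeo.symm t).2
    rw [continuousOn_iff_continuous_restrict]
    have hrestr : (Icc (0 : ℝ) (4 * π)).domRestrict phi
        = fun t => (homeo.symm t : ℝ) := funext key
    rw [hrestr]
    exact continuous_subtype_val.comp homeo.symm.continuous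
  · -- smoothness
    intro t ht
    obtain ⟨s, hs, hGs⟩ := hsurj t (Ioo_subset_Icc_self ht)
    have hs' : s ∈ Ioo (0 : ℝ) (2 * π) := by
      constructor
      · rcases hs.1.lt_or_eq with h | h
        · exact h
        · exfalso; rw [← h, hG0] at hGs; exact absurd hGs.symm (ne_of_gt ht.1)
      · rcases hs.2.lt_or_eq with h | h
        · exact h
        · exfalso; rw [h, hG2] at hGs; exact absurd hGs (ne_of_gt ht.2)
    have hcos1 : Real.cos s ≠ 1 := by
      intro h
      have := (Real.cos_eq_one_iff_of_lt_of_lt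
        (by linarith [hs'.1] : -(2 * π) < s) hs'.2).1 h
      exact absurd this (ne_of_gt hs'.1)
    have hne : (2 * (1 - Real.cos s)) ≠ 0 := by
      intro h
      apply hcos1
      linarith [(by linarith : (1 : ℝ) - Real.cos s = 0)]
    have hd : HasStrictDerivAt G (2 * (1 - Real.cos s)) s :=
      ((hasStrictDerivAt_id s).sub (Real.hasStrictDerivAt_sin s)).const_mul 2
    have hfe := hd.hasStrictFDerivAt_equiv hne
    have hGc : ContDiffAt ℝ (⊤ : ℕ∞) G s := hG.contDiffAt
    have hinv : ContDiffAt ℝ (⊤ : ℕ∞) (hGc.localInverse hfe.hasFDerivAt (by simp)) (G s) :=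
      hGc.to_localInverse hfe.hasFDerivAt (by simp)
    have heq : ∀ᶠ x in nhds s, phi (G x) = x :=
      (isOpen_Ioo.eventually_mem hs').mono fun x hx => hphi x (Ioo_subset_Icc_self hx)
    have huniq := (hGc.hasStrictFDerivAt' hfe.hasFDerivAt (by simp)).localInverse_unique heq
    have hsm : ContDiffAt ℝ (⊤ : ℕ∞) phi (G s) := hinv.congr_of_eventuallyEq huniq
    rw [hGs] at hsm
    exact hsm.contDiffWithinAt

theorem extension_continuous_and_smooth (n : ℕ) (phi : ℝ → ℝ)
    (hphi : ∀ s ∈ Icc (0 : ℝ) (2 * π), phi (2 * (s - Real.sin s)) = s)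
    (f : Hpt n → Hpt n)
    (hf : ∀ p : Hpt n,
      f p = (Real.cos (phi p.2.2) • p.1 + Real.sin (phi p.2.2) • p.2.1,
             Real.sin (phi p.2.2) • p.1 - Real.cos (phi p.2.2) • p.2.1,
             p.2.2)) :
    ContinuousOn f {p : Hpt n | p.2.2 ∈ Icc 0 (4 * π)} ∧
    ContDiffOn ℝ (⊤ : ℕ∞) f {p : Hpt n | p.2.2 ∈ Ioo 0 (4 * π)} := by
  obtain ⟨hpc, hpsm⟩ := phi_props phi hphi
  have hfeq : f = fun p : Hpt n =>
      ((Real.cos (phi p.2.2) • p.1 + Real.sin (phi p.2.2) • p.2.1,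
        Real.sin (phi p.2.2) • p.1 - Real.cos (phi p.2.2) • p.2.1,
        p.2.2) : Hpt n) := funext hf
  rw [hfeq]
  have hproj : Continuous (fun p : Hpt n => p.2.2) := by fun_prop
  have hprojd : ContDiff ℝ (⊤ : ℕ∞) (fun p : Hpt n => p.2.2) := contDiff_snd.comp contDiff_snd
  have hx : Continuous (fun p : Hpt n => p.1) := continuous_fst
  have hy : Continuous (fun p : Hpt n => p.2.1) := by fun_prop
  have hxd : ContDiff ℝ (⊤ : ℕ∞) (fun p : Hpt n => p.1) := contDiff_fst
  have hyd : ContDiff ℝ (⊤ : ℕ∞) (fun p : Hpt n => p.2.1) := contDiff_fst.comp contDiff_snd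
  constructor
  · -- continuity
    set A := {p : Hpt n | p.2.2 ∈ Icc 0 (4 * π)}
    have hphic : ContinuousOn (fun p : Hpt n => phi p.2.2) A :=
      hpc.comp hproj.continuousOn fun p hp => hp
    have hcosc : ContinuousOn (fun p : Hpt n => Real.cos (phi p.2.2)) A :=
      Real.continuous_cos.comp_continuousOn hphic
    have hsinc : ContinuousOn (fun p : Hpt n => Real.sin (phi p.2.2)) A :=
      Real.continuous_sin.comp_continuousOn hphic
    exact ((hcosc.smul hx.continuousOn).add (hsinc.smul hy.continuousOn)).prodMk
      (((hsinc.smul hx.continuousOn).sub (hcosc.smul hy.continuousOn)).prodMk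
        hproj.continuousOn)
  · -- smoothness
    set B := {p : Hpt n | p.2.2 ∈ Ioo 0 (4 * π)}
    have hphid : ContDiffOn ℝ (⊤ : ℕ∞) (fun p : Hpt n => phi p.2.2) B :=
      hpsm.comp hprojd.contDiffOn fun p hp => hp
    have hcosd : ContDiffOn ℝ (⊤ : ℕ∞) (fun p : Hpt n => Real.cos (phi p.2.2)) B :=
      Real.contDiff_cos.comp_contDiffOn hphid
    have hsind : ContDiffOn ℝ (⊤ : ℕ∞) (fun p : Hpt n => Real.sin (phi p.2.2)) B :=
      Real.contDiff_sin.comp_contDiffOn hphid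
    exact ((hcosd.smul hxd.contDiffOn).add (hsind.smul hyd.contDiffOn)).prodMk
      (((hsind.smul hxd.contDiffOn).sub (hcosd.smul hyd.contDiffOn)).prodMk
        hprojd.contDiffOn)
end
end

section
/- Let f: ℍⁿ → ℍⁿ be Lipschitz and P-differentiable at p₀ with differential P(f)(p₀). If there is a sequence of distinct points pₙ → p₀, pₙ ≠ p₀, with f(pₙ) = f(p₀) for all n, then P(f)(p₀) is not injective. -/
open Real Set

noncomputable section

namespace HAux

variable {n : ℕ}


lemma dot_comm (x y : Fin n → ℝ) : dot x y = dot y x := by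
  simp [dot, mul_comm]

@[simp] lemma dot_zero_left (y : Fin n → ℝ) : dot 0 y = 0 := by simp [dot]
@[simp] lemma dot_zero_right (x : Fin n → ℝ) : dot x 0 = 0 := by simp [dot]

lemma dot_neg_left (x y : Fin n → ℝ) : dot (-x) y = -dot x y := by
  simp [dot, Finset.sum_neg_distrib]

lemma dot_neg_right (x y : Fin n → ℝ) : dot x (-y) = -dot x y := by
  rw [dot_comm, dot_neg_left, dot_comm]

lemma dot_add_left (x y z : Fin n → ℝ) : dot (x + y) z = dot x z + dot y z := by
  simp [dot, add_mul, Finset.sum_add_distrib]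

lemma dot_add_right (x y z : Fin n → ℝ) : dot x (y + z) = dot x y + dot x z := by
  rw [dot_comm, dot_add_left, dot_comm y x, dot_comm z x]

lemma dot_sub_left (x y z : Fin n → ℝ) : dot (x - y) z = dot x z - dot y z := by
  rw [sub_eq_add_neg, dot_add_left, dot_neg_left]; ring

lemma dot_sub_right (x y z : Fin n → ℝ) : dot x (y - z) = dot x y - dot x z := by
  rw [dot_comm, dot_sub_left, dot_comm y x, dot_comm z x]

lemma dot_smul_left (s : ℝ) (x y : Fin n → ℝ) : dot (s • x) y = s * dot x y := by
  simp [dot, Finset.mul_sum, mul_assoc]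

lemma dot_smul_right (s : ℝ) (x y : Fin n → ℝ) : dot x (s • y) = s * dot x y := by
  rw [dot_comm, dot_smul_left, dot_comm]

lemma dot_self_nonneg (x : Fin n → ℝ) : 0 ≤ dot x x :=
  Finset.sum_nonneg fun i _ => mul_self_nonneg _

lemma dot_self_eq_zero {x : Fin n → ℝ} (h : dot x x = 0) : x = 0 := by
  funext i
  have := (Finset.sum_eq_zero_iff_of_nonneg (fun i _ => mul_self_nonneg (x i))).1 h i (Finset.mem_univ i)
  simpa [mul_self_eq_zero] using this

lemma sq_le_dot_self (x : Fin n → ℝ) (i : Fin n) : x i ^ 2 ≤ dot x x := by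
  rw [dot, ← Finset.sum_erase_add _ _ (Finset.mem_univ i)]
  have : 0 ≤ ∑ j ∈ Finset.univ.erase i, x j * x j :=
    Finset.sum_nonneg fun j _ => mul_self_nonneg _
  nlinarith


-- group lemmas
lemma Hmul_zero (p : Hpt n) : Hmul p 0 = p := by
  simp [Hmul, dot_zero_right]

lemma zero_Hmul (p : Hpt n) : Hmul 0 p = p := by
  simp [Hmul, dot_zero_left]

lemma Hinv_zero : Hinv (0 : Hpt n) = 0 := by simp [Hinv]

lemma Hinv_Hinv (p : Hpt n) : Hinv (Hinv p) = p := by simp [Hinv]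

lemma Hmul_left_inv (p : Hpt n) : Hmul (Hinv p) p = 0 := by
  simp [Hmul, Hinv, dot_neg_left, dot_comm p.2.1 p.1]

lemma Hmul_right_inv (p : Hpt n) : Hmul p (Hinv p) = 0 := by
  simp [Hmul, Hinv, dot_neg_left, dot_neg_right, dot_comm p.2.1 p.1]

lemma Hmul_assoc (a b c : Hpt n) : Hmul (Hmul a b) c = Hmul a (Hmul b c) := by
  simp only [Hmul, dot_add_left, dot_add_right, Prod.mk.injEq]
  refine ⟨by abel, by abel, by ring⟩

lemma Hinv_Hmul (a b : Hpt n) : Hinv (Hmul a b) = Hmul (Hinv b) (Hinv a) := by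
  simp only [Hmul, Hinv, dot_neg_left, dot_neg_right, Prod.mk.injEq]
  refine ⟨by abel, by abel, ?_⟩
  rw [dot_comm b.2.1 a.1, dot_comm b.1 a.2.1]; ring

lemma Hmul_cancel_left (a x : Hpt n) : Hmul a (Hmul (Hinv a) x) = x := by
  rw [← Hmul_assoc, Hmul_right_inv, zero_Hmul]

lemma Hdil_Hdil (s t : ℝ) (p : Hpt n) : Hdil s (Hdil t p) = Hdil (s * t) p := by
  simp only [Hdil, smul_smul, Prod.mk.injEq]
  exact ⟨trivial, trivial, by ring⟩

lemma Hdil_one (p : Hpt n) : Hdil 1 p = p := by simp [Hdil]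

lemma Hdil_zero (s : ℝ) : Hdil s (0 : Hpt n) = 0 := by simp [Hdil]


/-- the gauge quantity before taking the fourth root -/
def Sq (p q : Hpt n) : ℝ :=
  (dot (p.1 - q.1) (p.1 - q.1) + dot (p.2.1 - q.2.1) (p.2.1 - q.2.1)) ^ 2
    + (p.2.2 - q.2.2 + 2 * (dot p.1 q.2.1 - dot p.2.1 q.1)) ^ 2

lemma dK_def (p q : Hpt n) : dK p q = (Sq p q) ^ ((1:ℝ)/4) := rfl

lemma Sq_nonneg (p q : Hpt n) : 0 ≤ Sq p q := by unfold Sq; positivity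

lemma dK_nonneg (p q : Hpt n) : 0 ≤ dK p q := Real.rpow_nonneg (Sq_nonneg p q) _

lemma dK_pow4 (p q : Hpt n) : (dK p q) ^ (4:ℕ) = Sq p q := by
  rw [dK_def, ← Real.rpow_natCast (Sq p q ^ ((1:ℝ)/4)) 4, ← Real.rpow_mul (Sq_nonneg p q)]
  norm_num

lemma dK_self (p : Hpt n) : dK p p = 0 := by
  have : Sq p p = 0 := by
    simp [Sq, dot_comm p.1 p.2.1, dot_zero_left]
  rw [dK_def, this, Real.zero_rpow (by norm_num)]

lemma dK_eq_zero {p q : Hpt n} (h : dK p q = 0) : p = q := by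
  have hS : (dot (p.1 - q.1) (p.1 - q.1) + dot (p.2.1 - q.2.1) (p.2.1 - q.2.1)) ^ 2
      + (p.2.2 - q.2.2 + 2 * (dot p.1 q.2.1 - dot p.2.1 q.1)) ^ 2 = 0 := by
    have h4 := dK_pow4 p q
    rw [h] at h4
    simpa [Sq] using h4.symm
  set a := dot (p.1 - q.1) (p.1 - q.1) with ha
  set b := dot (p.2.1 - q.2.1) (p.2.1 - q.2.1) with hb
  set c := p.2.2 - q.2.2 + 2 * (dot p.1 q.2.1 - dot p.2.1 q.1) with hc
  have hanb : 0 ≤ a := dot_self_nonneg _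
  have hbnb : 0 ≤ b := dot_self_nonneg _
  have hab : a + b = 0 := by nlinarith [sq_nonneg (a + b), sq_nonneg c]
  have hx : p.1 = q.1 := sub_eq_zero.1 (dot_self_eq_zero (by linarith : a = 0))
  have hy : p.2.1 = q.2.1 := sub_eq_zero.1 (dot_self_eq_zero (by linarith : b = 0))
  have hc0 : c = 0 := by nlinarith [sq_nonneg (a + b), sq_nonneg c]
  have ht : p.2.2 = q.2.2 := by
    rw [hc, hx, hy, dot_comm q.1 q.2.1] at hc0
    linarith
  exact Prod.ext hx (Prod.ext hy ht)

/-- `dK p q` is the gauge of the right quotient `q * p⁻¹`. -/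
lemma dK_eq_gauge (p q : Hpt n) : dK p q = dK (Hmul q (Hinv p)) 0 := by
  obtain ⟨px, py, pt⟩ := p
  obtain ⟨qx, qy, qt⟩ := q
  rw [dK_def, dK_def]
  congr 1
  simp only [Sq, Hmul, Hinv, Prod.fst_zero, Prod.snd_zero, sub_zero,
    dot_zero_left, dot_zero_right]
  have e1 : qx + -px = -(px - qx) := by abel
  have e2 : qy + -py = -(py - qy) := by abel
  rw [e1, e2, dot_neg_left, dot_neg_right, dot_neg_left, dot_neg_right,
    dot_neg_right, dot_neg_right, dot_comm qy px, dot_comm qx py]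
  ring

lemma dK_dil_zero {c : ℝ} (hc : 0 ≤ c) (z : Hpt n) : dK (Hdil c z) 0 = c * dK z 0 := by
  rw [dK_def, dK_def]
  have hSq : Sq (Hdil c z) 0 = c ^ (4:ℕ) * Sq z 0 := by
    simp only [Sq, Hdil, Prod.fst_zero, Prod.snd_zero, sub_zero, dot_smul_left,
      dot_smul_right, dot_zero_left, dot_zero_right]
    ring
  rw [hSq, Real.mul_rpow (by positivity) (Sq_nonneg z 0), ← Real.rpow_natCast c 4,
    ← Real.rpow_mul hc]
  norm_num

lemma norm_le_of_dK {z : Hpt n} {C : ℝ} (hC : 0 ≤ C) (h : dK z 0 ≤ C) : ‖z‖ ≤ C + C ^ 2 := by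
  have hS : Sq z 0 ≤ C ^ 4 := by
    rw [← dK_pow4]
    exact pow_le_pow_left₀ (dK_nonneg z 0) h 4
  have hSz : Sq z 0 = (dot z.1 z.1 + dot z.2.1 z.2.1) ^ 2 + z.2.2 ^ 2 := by
    simp [Sq, dot_zero_left, dot_zero_right]
  rw [hSz] at hS
  have h1 : dot z.1 z.1 + dot z.2.1 z.2.1 ≤ C ^ 2 := by
    nlinarith [dot_self_nonneg z.1, dot_self_nonneg z.2.1, sq_nonneg z.2.2,
      sq_nonneg (dot z.1 z.1 + dot z.2.1 z.2.1 + C ^ 2)]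
  have ht : |z.2.2| ≤ C ^ 2 := by
    rw [abs_le]
    constructor <;> nlinarith [sq_nonneg (dot z.1 z.1 + dot z.2.1 z.2.1)]
  have hx : ∀ i, |z.1 i| ≤ C := by
    intro i
    rw [abs_le]
    have := sq_le_dot_self z.1 i
    constructor <;> nlinarith [dot_self_nonneg z.2.1]
  have hy : ∀ i, |z.2.1 i| ≤ C := by
    intro i
    rw [abs_le]
    have := sq_le_dot_self z.2.1 i
    constructor <;> nlinarith [dot_self_nonneg z.1]
  have hCC : 0 ≤ C ^ 2 := sq_nonneg C
  rw [Prod.norm_def, Prod.norm_def]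
  refine max_le ?_ (max_le ?_ ?_)
  · refine le_trans ((pi_norm_le_iff_of_nonneg hC).2 fun i => ?_) (by linarith)
    simpa [Real.norm_eq_abs] using hx i
  · refine le_trans ((pi_norm_le_iff_of_nonneg hC).2 fun i => ?_) (by linarith)
    simpa [Real.norm_eq_abs] using hy i
  · simpa [Real.norm_eq_abs] using le_trans ht (by linarith)

lemma Continuous.dotc {α : Type*} [TopologicalSpace α] {f g : α → Fin n → ℝ}
    (hf : Continuous f) (hg : Continuous g) : Continuous fun a => dot (f a) (g a) := by
  unfold dot
  exact continuous_finset_sum _ fun i _ =>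
    ((continuous_apply i).comp hf).mul ((continuous_apply i).comp hg)

lemma Continuous.dKc {α : Type*} [TopologicalSpace α] {f g : α → Hpt n}
    (hf : Continuous f) (hg : Continuous g) : Continuous fun a => dK (f a) (g a) := by
  have f1 : Continuous fun a => (f a).1 := continuous_fst.comp hf
  have f2 : Continuous fun a => (f a).2.1 := (continuous_fst.comp (continuous_snd.comp hf))
  have f3 : Continuous fun a => (f a).2.2 := (continuous_snd.comp (continuous_snd.comp hf))
  have g1 : Continuous fun a => (g a).1 := continuous_fst.comp hg
  have g2 : Continuous fun a => (g a).2.1 := (continuous_fst.comp (continuous_snd.comp hg))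
  have g3 : Continuous fun a => (g a).2.2 := (continuous_snd.comp (continuous_snd.comp hg))
  unfold dK
  have c1 := Continuous.dotc (f1.sub g1) (f1.sub g1)
  have c2 := Continuous.dotc (f2.sub g2) (f2.sub g2)
  have c3 : Continuous fun a =>
      (f a).2.2 - (g a).2.2 + 2 * (dot (f a).1 (g a).2.1 - dot (f a).2.1 (g a).1) :=
    (f3.sub g3).add (continuous_const.mul ((Continuous.dotc f1 g2).sub (Continuous.dotc f2 g1)))
  exact (((c1.add c2).pow 2).add (c3.pow 2)).rpow_const fun x => Or.inr (by norm_num)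

lemma Continuous.Hmulc {α : Type*} [TopologicalSpace α] {f g : α → Hpt n}
    (hf : Continuous f) (hg : Continuous g) : Continuous fun a => Hmul (f a) (g a) := by
  have f1 : Continuous fun a => (f a).1 := continuous_fst.comp hf
  have f2 : Continuous fun a => (f a).2.1 := (continuous_fst.comp (continuous_snd.comp hf))
  have f3 : Continuous fun a => (f a).2.2 := (continuous_snd.comp (continuous_snd.comp hf))
  have g1 : Continuous fun a => (g a).1 := continuous_fst.comp hg
  have g2 : Continuous fun a => (g a).2.1 := (continuous_fst.comp (continuous_snd.comp hg))
  have g3 : Continuous fun a => (g a).2.2 := (continuous_snd.comp (continuous_snd.comp hg))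
  unfold Hmul
  exact (f1.add g1).prodMk ((f2.add g2).prodMk
    ((f3.add g3).add (continuous_const.mul ((Continuous.dotc f2 g1).sub (Continuous.dotc f1 g2)))))

lemma continuous_Hinv : Continuous fun x : Hpt n => Hinv x := by
  unfold Hinv
  exact (continuous_fst.neg).prodMk ((continuous_snd.fst.neg).prodMk continuous_snd.snd.neg)


lemma isLinearMap_of_additive_posHomog {V W : Type*} [AddCommGroup V] [Module ℝ V]
    [AddCommGroup W] [Module ℝ W] (B : V → W)
    (hadd : ∀ v w, B (v + w) = B v + B w)
    (hsm : ∀ s : ℝ, 0 < s → ∀ v, B (s • v) = s • B v) : IsLinearMap ℝ B := by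
  have h0 : B 0 = 0 := by
    have h := hadd 0 0
    rw [add_zero] at h
    exact left_eq_add.mp h
  have hneg : ∀ v, B (-v) = -B v := by
    intro v
    have h := hadd v (-v)
    rw [add_neg_cancel, h0] at h
    exact eq_neg_of_add_eq_zero_right h.symm
  refine ⟨hadd, ?_⟩
  intro s v
  rcases lt_trichotomy s 0 with h | h | h
  · have hp := hsm (-s) (by linarith) v
    calc B (s • v) = -B ((-s) • v) := by rw [← hneg, neg_smul, neg_neg]
    _ = -((-s) • B v) := by rw [hp]
    _ = s • B v := by rw [neg_smul, neg_neg]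
  · subst h; simp [h0]
  · exact hsm s h v


lemma hom_zero (A : Hpt n → Hpt n)
    (hhom : ∀ q q' : Hpt n, A (Hmul q q') = Hmul (A q) (A q')) : A (0 : Hpt n) = 0 := by
  have h := hhom 0 0
  have h00 : Hmul (0 : Hpt n) 0 = 0 := by simp [Hmul, dot_zero_left]
  rw [h00] at h
  have e1 : (A (0:Hpt n)).1 = 0 := by
    have h1 := congrArg (fun z : Hpt n => z.1) h
    simp only [Hmul] at h1
    exact left_eq_add.mp h1
  have e2 : (A (0:Hpt n)).2.1 = 0 := by
    have h1 := congrArg (fun z : Hpt n => z.2.1) h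
    simp only [Hmul] at h1
    exact left_eq_add.mp h1
  have e3 : (A (0:Hpt n)).2.2 = 0 := by
    have h3 := congrArg (fun z : Hpt n => z.2.2) h
    simp only [Hmul, e1, e2, dot_zero_left, dot_zero_right] at h3
    linarith
  exact Prod.ext e1 (Prod.ext e2 e3)

lemma A_continuous (A : Hpt n → Hpt n)
    (hhom : ∀ q q' : Hpt n, A (Hmul q q') = Hmul (A q) (A q'))
    (hdilA : ∀ s : ℝ, 0 < s → ∀ q : Hpt n, A (Hdil s q) = Hdil s (A q)) :
    Continuous A := by
  have two_cancel : ∀ a : Fin n → ℝ, a + a = 0 → a = 0 := by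
    intro a h
    have h2 : (2:ℝ) • a = 0 := by rw [two_smul]; exact h
    rcases smul_eq_zero.mp h2 with h3 | h3
    · norm_num at h3
    · exact h3
  have hA0 : A (0 : Hpt n) = 0 := by
    have h := hhom 0 0
    have h00 : Hmul (0 : Hpt n) 0 = 0 := by simp [Hmul, dot_zero_left]
    rw [h00] at h
    have e1 : (A (0:Hpt n)).1 = 0 := by
      have h1 := congrArg (fun z : Hpt n => z.1) h
      simp only [Hmul] at h1
      exact left_eq_add.mp h1
    have e2 : (A (0:Hpt n)).2.1 = 0 := by
      have h1 := congrArg (fun z : Hpt n => z.2.1) h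
      simp only [Hmul] at h1
      exact left_eq_add.mp h1
    have e3 : (A (0:Hpt n)).2.2 = 0 := by
      have h3 := congrArg (fun z : Hpt n => z.2.2) h
      simp only [Hmul, e1, e2, dot_zero_left, dot_zero_right] at h3
      linarith
    exact Prod.ext e1 (Prod.ext e2 e3)
  have hcmul : ∀ t t' : ℝ, A ((0,0,t+t') : Hpt n) = Hmul (A (0,0,t)) (A (0,0,t')) := by
    intro t t'
    have hm : Hmul ((0,0,t) : Hpt n) (0,0,t') = (0,0,t+t') := by
      simp [Hmul, dot_zero_left]
    rw [← hm]; exact hhom _ _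
  have hcdil : ∀ s : ℝ, 0 < s → ∀ t : ℝ, A ((0,0,s^2*t) : Hpt n) = Hdil s (A (0,0,t)) := by
    intro s hs t
    have hd : Hdil s ((0,0,t) : Hpt n) = (0,0,s^2*t) := by simp [Hdil]
    rw [← hd]; exact hdilA s hs _
  -- first component vanishes on the center
  have g1 : ∀ t : ℝ, (A ((0,0,t) : Hpt n)).1 = 0 := by
    intro t
    have e4 : ((2:ℝ)^2*t) = (t+t)+(t+t) := by ring
    have hd := congrArg (fun z : Hpt n => z.1) (hcdil 2 two_pos t)
    rw [e4] at hd
    have h1 := congrArg (fun z : Hpt n => z.1) (hcmul (t+t) (t+t))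
    have h2 := congrArg (fun z : Hpt n => z.1) (hcmul t t)
    simp only [Hmul, Hdil] at hd h1 h2
    rw [h2] at h1
    rw [h1, two_smul ℝ] at hd
    exact two_cancel _ (left_eq_add.mp hd.symm)
  have g2 : ∀ t : ℝ, (A ((0,0,t) : Hpt n)).2.1 = 0 := by
    intro t
    have e4 : ((2:ℝ)^2*t) = (t+t)+(t+t) := by ring
    have hd := congrArg (fun z : Hpt n => z.2.1) (hcdil 2 two_pos t)
    rw [e4] at hd
    have h1 := congrArg (fun z : Hpt n => z.2.1) (hcmul (t+t) (t+t))
    have h2 := congrArg (fun z : Hpt n => z.2.1) (hcmul t t)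
    simp only [Hmul, Hdil] at hd h1 h2
    rw [h2] at h1
    rw [h1, two_smul ℝ] at hd
    exact two_cancel _ (left_eq_add.mp hd.symm)
  have g3add : ∀ t t' : ℝ, (A ((0,0,t+t') : Hpt n)).2.2
      = (A ((0,0,t) : Hpt n)).2.2 + (A ((0,0,t') : Hpt n)).2.2 := by
    intro t t'
    have h := congrArg (fun z : Hpt n => z.2.2) (hcmul t t')
    simp only [Hmul, g1, g2, dot_zero_left, dot_zero_right] at h
    rw [h]; ring
  set c : ℝ := (A ((0,0,1) : Hpt n)).2.2 with hc
  have g3 : ∀ t : ℝ, (A ((0,0,t) : Hpt n)).2.2 = c * t := by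
    have hpos : ∀ t : ℝ, 0 < t → (A ((0,0,t) : Hpt n)).2.2 = c * t := by
      intro t ht
      have hs : (0:ℝ) < Real.sqrt t := Real.sqrt_pos.mpr ht
      have h := congrArg (fun z : Hpt n => z.2.2) (hcdil (Real.sqrt t) hs 1)
      simp only [Hdil] at h
      rw [Real.sq_sqrt ht.le, mul_one] at h
      rw [h]; ring
    have hzero : (A ((0,0,(0:ℝ)) : Hpt n)).2.2 = 0 := by
      have : ((0,0,(0:ℝ)) : Hpt n) = 0 := rfl
      rw [this, hA0]; rfl
    intro t
    rcases lt_trichotomy t 0 with h | h | h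
    · have hadd := g3add t (-t)
      rw [add_neg_cancel, hzero, hpos (-t) (by linarith)] at hadd
      have : (A ((0,0,t) : Hpt n)).2.2 = c * t := by linarith [hadd]
      exact this
    · subst h; rw [hzero]; ring
    · exact hpos t h
  have hsplitpt : ∀ (x y : Fin n → ℝ) (t : ℝ),
      Hmul ((x,y,0) : Hpt n) (0,0,t) = (x,y,t) := by
    intro x y t
    simp [Hmul, dot_zero_right]
  have hAxyt : ∀ (x y : Fin n → ℝ) (t : ℝ), A ((x,y,t) : Hpt n)
      = ((A ((x,y,0) : Hpt n)).1, (A ((x,y,0) : Hpt n)).2.1,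
         (A ((x,y,0) : Hpt n)).2.2 + c * t) := by
    intro x y t
    rw [← hsplitpt x y t, hhom]
    refine Prod.ext ?_ (Prod.ext ?_ ?_)
    · show (A ((x,y,0) : Hpt n)).1 + (A ((0,0,t) : Hpt n)).1 = _
      rw [g1, add_zero]
    · show (A ((x,y,0) : Hpt n)).2.1 + (A ((0,0,t) : Hpt n)).2.1 = _
      rw [g2, add_zero]
    · show (A ((x,y,0) : Hpt n)).2.2 + (A ((0,0,t) : Hpt n)).2.2
        + 2 * (dot (A ((x,y,0) : Hpt n)).2.1 (A ((0,0,t) : Hpt n)).1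
             - dot (A ((x,y,0) : Hpt n)).1 (A ((0,0,t) : Hpt n)).2.1) = _
      rw [g1, g2, g3, dot_zero_right, dot_zero_right]
      ring
  -- third component vanishes on the horizontal plane
  have h3 : ∀ (x y : Fin n → ℝ), (A ((x,y,0) : Hpt n)).2.2 = 0 := by
    intro x y
    have hm2 : Hmul ((x,y,0) : Hpt n) (x,y,0) = (x+x, y+y, 0) := by
      refine Prod.ext rfl (Prod.ext rfl ?_)
      show (0:ℝ) + 0 + 2*(dot y x - dot x y) = 0
      rw [dot_comm y x]; ring
    have h := congrArg (fun z : Hpt n => z.2.2) (hhom (x,y,0) (x,y,0))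
    rw [hm2] at h
    simp only [Hmul] at h
    rw [dot_comm (A ((x,y,0) : Hpt n)).2.1 (A ((x,y,0) : Hpt n)).1] at h
    -- dilation
    have hd : Hdil 2 ((x,y,0) : Hpt n) = (x+x, y+y, 0) := by
      refine Prod.ext (two_smul ℝ x) (Prod.ext (two_smul ℝ y) ?_)
      show (2:ℝ)^2 * 0 = 0
      ring
    have h4 := congrArg (fun z : Hpt n => z.2.2) (hdilA 2 two_pos (x,y,0))
    rw [hd] at h4
    simp only [Hdil] at h4
    rw [h4] at h
    norm_num at h
    linarith
  -- the horizontal part as a linear map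
  set Bf : ((Fin n → ℝ) × (Fin n → ℝ)) → ((Fin n → ℝ) × (Fin n → ℝ)) :=
    fun v => ((A ((v.1, v.2, 0) : Hpt n)).1, (A ((v.1, v.2, 0) : Hpt n)).2.1) with hBf
  have hBadd : ∀ v w, Bf (v + w) = Bf v + Bf w := by
    intro v w
    have hm : Hmul ((v.1,v.2,0) : Hpt n) (w.1,w.2,0)
        = (v.1+w.1, v.2+w.2, 2*(dot v.2 w.1 - dot v.1 w.2)) := by
      simp [Hmul]
    have h := hhom (v.1,v.2,0) (w.1,w.2,0)
    rw [hm] at h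
    have e1 := congrArg (fun z : Hpt n => z.1) h
    have e2 := congrArg (fun z : Hpt n => z.2.1) h
    simp only [Hmul] at e1 e2
    have f1 := congrArg (fun z : Hpt n => z.1)
      (hAxyt (v.1+w.1) (v.2+w.2) (2*(dot v.2 w.1 - dot v.1 w.2)))
    have f2 := congrArg (fun z : Hpt n => z.2.1)
      (hAxyt (v.1+w.1) (v.2+w.2) (2*(dot v.2 w.1 - dot v.1 w.2)))
    simp only at f1 f2
    refine Prod.ext ?_ ?_
    · show (A (((v+w).1, (v+w).2, 0) : Hpt n)).1 = (A ((v.1,v.2,0) : Hpt n)).1 + (A ((w.1,w.2,0) : Hpt n)).1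
      rw [Prod.fst_add, Prod.snd_add, ← f1, e1]
    · show (A (((v+w).1, (v+w).2, 0) : Hpt n)).2.1 = (A ((v.1,v.2,0) : Hpt n)).2.1 + (A ((w.1,w.2,0) : Hpt n)).2.1
      rw [Prod.fst_add, Prod.snd_add, ← f2, e2]
  have hBsm : ∀ s : ℝ, 0 < s → ∀ v, Bf (s • v) = s • Bf v := by
    intro s hs v
    have hd : Hdil s ((v.1,v.2,0) : Hpt n) = (s • v.1, s • v.2, 0) := by
      simp [Hdil]
    have h := hdilA s hs (v.1,v.2,0)
    rw [hd] at h
    have e1 := congrArg (fun z : Hpt n => z.1) h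
    have e2 := congrArg (fun z : Hpt n => z.2.1) h
    simp only [Hdil] at e1 e2
    refine Prod.ext ?_ ?_
    · show (A (((s•v).1, (s•v).2, 0) : Hpt n)).1 = s • (A ((v.1,v.2,0) : Hpt n)).1
      rw [Prod.smul_fst, Prod.smul_snd, e1]
    · show (A (((s•v).1, (s•v).2, 0) : Hpt n)).2.1 = s • (A ((v.1,v.2,0) : Hpt n)).2.1
      rw [Prod.smul_fst, Prod.smul_snd, e2]
  have hBlin : IsLinearMap ℝ Bf := isLinearMap_of_additive_posHomog Bf hBadd hBsm
  have hBcont : Continuous Bf := by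
    have := LinearMap.continuous_of_finiteDimensional (IsLinearMap.mk' Bf hBlin)
    exact this
  have hform : A = fun p : Hpt n =>
      (((Bf (p.1, p.2.1)).1, (Bf (p.1, p.2.1)).2, c * p.2.2) : Hpt n) := by
    funext p
    have h := hAxyt p.1 p.2.1 p.2.2
    have h3' := h3 p.1 p.2.1
    rw [h3', zero_add] at h
    exact h
  rw [hform]
  have hpair : Continuous fun p : Hpt n => ((p.1, p.2.1) : (Fin n → ℝ) × (Fin n → ℝ)) :=
    continuous_fst.prodMk continuous_snd.fst
  exact (continuous_fst.comp (hBcont.comp hpair)).prodMk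
    ((continuous_snd.comp (hBcont.comp hpair)).prodMk
      (continuous_const.mul continuous_snd.snd))



end HAux

open HAux Filter in
theorem pansu_differential_noninjective (n : ℕ) (f : Hpt n → Hpt n) (L : ℝ)
    (hLip : ∀ p q : Hpt n, dK (f p) (f q) ≤ L * dK p q)
    (p₀ : Hpt n) (A : Hpt n → Hpt n)
    (hhom : ∀ q q' : Hpt n, A (Hmul q q') = Hmul (A q) (A q'))
    (hdilA : ∀ s : ℝ, 0 < s → ∀ q : Hpt n, A (Hdil s q) = Hdil s (A q))
    (hdiff : ∀ ε > (0 : ℝ), ∀ M > (0 : ℝ), ∃ η > (0 : ℝ), ∀ s : ℝ, 0 < s → s < η →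
      ∀ q : Hpt n, dK q 0 ≤ M →
        dK (Hdil (1 / s) (Hmul (Hinv (f p₀)) (f (Hmul p₀ (Hdil s q))))) (A q) ≤ ε)
    (p : ℕ → Hpt n)
    (hne : ∀ m, p m ≠ p₀)
    (hdistinct : ∀ m m', m ≠ m' → p m ≠ p m')
    (hval : ∀ m, f (p m) = f p₀)
    (hconv : Filter.Tendsto (fun m => dK (p m) p₀) Filter.atTop (nhds 0)) :
    ¬ Function.Injective A := by
  intro hinj
  -- the points converge to `p₀` in the Euclidean topology
  have hpt : Tendsto p atTop (nhds p₀) := by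
    set w : ℕ → Hpt n := fun m => Hmul p₀ (Hinv (p m)) with hw
    have hwd : ∀ m, dK (p m) p₀ = dK (w m) 0 := fun m => dK_eq_gauge (p m) p₀
    have hdw : Tendsto (fun m => dK (w m) 0) atTop (nhds 0) := by
      have : (fun m => dK (w m) 0) = fun m => dK (p m) p₀ := by
        funext m; rw [hwd m]
      rw [this]; exact hconv
    have hw0 : Tendsto w atTop (nhds (0 : Hpt n)) := by
      apply squeeze_zero_norm (a := fun m => dK (w m) 0 + (dK (w m) 0) ^ 2)
      · intro m
        exact norm_le_of_dK (dK_nonneg _ _) le_rfl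
      · have h2 := hdw.add (hdw.pow 2)
        norm_num at h2
        exact h2
    have hrec : p = fun m => Hmul (Hinv (w m)) p₀ := by
      funext m
      rw [hw]
      show p m = Hmul (Hinv (Hmul p₀ (Hinv (p m)))) p₀
      rw [Hinv_Hmul, Hinv_Hinv, Hmul_assoc, Hmul_left_inv, Hmul_zero]
    have hcont : Continuous fun x : Hpt n => Hmul (Hinv x) p₀ :=
      Continuous.Hmulc continuous_Hinv continuous_const
    have h3 := (hcont.tendsto 0).comp hw0
    rw [Hinv_zero, zero_Hmul] at h3
    rw [hrec]
    exact h3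
  -- renormalized points
  set z : ℕ → Hpt n := fun m => Hmul (Hinv p₀) (p m) with hz
  set sc : ℕ → ℝ := fun m => dK (z m) 0 with hsc
  have hzp : ∀ m, Hmul p₀ (z m) = p m := fun m => Hmul_cancel_left _ _
  have hspos : ∀ m, 0 < sc m := by
    intro m
    rcases lt_or_eq_of_le (dK_nonneg (z m) 0) with h | h
    · exact h
    · exfalso
      apply hne m
      have hz0 : z m = 0 := dK_eq_zero h.symm
      have h4 := hzp m
      rw [hz0, Hmul_zero] at h4
      exact h4.symm
  set qs : ℕ → Hpt n := fun m => Hdil (1 / sc m) (z m) with hqs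
  have hq1 : ∀ m, dK (qs m) 0 = 1 := by
    intro m
    show dK (Hdil (1 / sc m) (z m)) 0 = 1
    rw [dK_dil_zero (le_of_lt (div_pos one_pos (hspos m))) (z m)]
    rw [one_div, inv_mul_cancel₀ (ne_of_gt (hspos m))]
  have hrecon : ∀ m, Hmul p₀ (Hdil (sc m) (qs m)) = p m := by
    intro m
    show Hmul p₀ (Hdil (sc m) (Hdil (1 / sc m) (z m))) = p m
    rw [Hdil_Hdil, mul_one_div, div_self (ne_of_gt (hspos m)), Hdil_one]
    exact hzp m
  -- the renormalization parameters tend to zero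
  have hstend : Tendsto sc atTop (nhds 0) := by
    have hcontz : Continuous fun x : Hpt n => dK (Hmul (Hinv p₀) x) 0 :=
      Continuous.dKc (Continuous.Hmulc continuous_const continuous_id) continuous_const
    have h2 := (hcontz.tendsto p₀).comp hpt
    rw [Hmul_left_inv, dK_self] at h2
    exact h2
  -- key estimate from P-differentiability
  have hkey : Tendsto (fun m => dK 0 (A (qs m))) atTop (nhds 0) := by
    rw [Metric.tendsto_atTop]
    intro ε hε
    obtain ⟨η, hη, hest⟩ := hdiff (ε/2) (by linarith) 1 one_pos
    obtain ⟨N, hN⟩ := (Metric.tendsto_atTop.mp hstend) η hη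
    refine ⟨N, fun m hm => ?_⟩
    have hsm : sc m < η := by
      have h5 := hN m hm
      rw [Real.dist_eq, sub_zero] at h5
      exact lt_of_le_of_lt (le_abs_self _) h5
    have h := hest (sc m) (hspos m) hsm (qs m) (le_of_eq (hq1 m))
    rw [hrecon m, hval m, Hmul_left_inv, Hdil_zero] at h
    rw [Real.dist_eq, sub_zero, abs_of_nonneg (dK_nonneg _ _)]
    linarith
  -- compactness: extract a convergent subsequence on the Korányi unit sphere
  have hball : ∀ m, qs m ∈ Metric.closedBall (0 : Hpt n) 2 := by
    intro m
    rw [Metric.mem_closedBall, dist_zero_right]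
    have h6 := norm_le_of_dK (z := qs m) (C := 1) zero_le_one (le_of_eq (hq1 m))
    norm_num at h6
    exact h6
  obtain ⟨a, -, φ, hφ, hlim⟩ :=
    tendsto_subseq_of_bounded Metric.isBounded_closedBall hball
  have hcont0 : Continuous fun x : Hpt n => dK x 0 :=
    Continuous.dKc continuous_id continuous_const
  have ha1 : dK a 0 = 1 := by
    have h1 : Tendsto (fun k => dK (qs (φ k)) 0) atTop (nhds (dK a 0)) :=
      (hcont0.tendsto a).comp hlim
    have h2 : Tendsto (fun k => dK (qs (φ k)) 0) atTop (nhds 1) := by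
      have : (fun k => dK (qs (φ k)) 0) = fun _ => (1:ℝ) := by
        funext k; exact hq1 (φ k)
      rw [this]
      exact tendsto_const_nhds
    exact tendsto_nhds_unique h1 h2
  have hAcont : Continuous A := A_continuous A hhom hdilA
  have hcontA0 : Continuous fun x : Hpt n => dK 0 (A x) :=
    Continuous.dKc continuous_const hAcont
  have ha0 : dK 0 (A a) = 0 := by
    have h1 : Tendsto (fun k => dK 0 (A (qs (φ k)))) atTop (nhds (dK 0 (A a))) :=
      (hcontA0.tendsto a).comp hlim
    have h2 : Tendsto (fun k => dK 0 (A (qs (φ k)))) atTop (nhds 0) :=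
      hkey.comp hφ.tendsto_atTop
    exact tendsto_nhds_unique h1 h2
  have hAa : A a = 0 := (dK_eq_zero ha0).symm
  have hA0 : A (0 : Hpt n) = 0 := hom_zero A hhom
  have haz : a = (0 : Hpt n) := hinj (by rw [hAa, hA0])
  rw [haz, dK_self] at ha1
  norm_num at ha1
end
end
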